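/- In the group G = (ℤ/5ℤ)² × (ℤ/7ℤ) of order 175, let H = {(0,0)} × (ℤ/7ℤ) be the subgroup of order 7. The four 7-element subsets {(0,0,0),(0,1,0),(0,3,1),(1,0,4),(1,2,6),(4,1,4),(4,4,6)}, {(0,0,0),(0,1,1),(0,2,0),(2,2,4),(2,3,6),(3,0,4),(3,4,6)}, {(0,0,0),(0,1,3),(1,1,3),(1,2,0),(2,0,2),(3,1,4),(4,2,2)}, {(0,0,0),(0,2,3),(1,0,2),(2,4,2),(3,2,3),(3,4,0),(4,2,4)} have within-block differences covering every element of G \ H exactly once. Consequently their translates together with the 25 cosets of H form a Steiner system S(2,7,175). -/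
import Mathlib

set_option maxRecDepth 10000

/-- Number of ordered pairs of distinct elements of `B` whose difference is `g`. -/
def dcount {G : Type*} [AddCommGroup G] [DecidableEq G] (B : Finset G) (g : G) : ℕ :=
  ((B ×ˢ B).filter (fun p => p.1 ≠ p.2 ∧ p.1 - p.2 = g)).card

def B13 : Fin 4 → Finset (ZMod 5 × ZMod 5 × ZMod 7) :=
  ![{(0,0,0),(0,1,0),(0,3,1),(1,0,4),(1,2,6),(4,1,4),(4,4,6)},
    {(0,0,0),(0,1,1),(0,2,0),(2,2,4),(2,3,6),(3,0,4),(3,4,6)},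
    {(0,0,0),(0,1,3),(1,1,3),(1,2,0),(2,0,2),(3,1,4),(4,2,2)},
    {(0,0,0),(0,2,3),(1,0,2),(2,4,2),(3,2,3),(3,4,0),(4,2,4)}]

/-- The subgroup `{(0,0)} × ℤ/7ℤ` of order 7, as a finset. -/
def H13 : Finset (ZMod 5 × ZMod 5 × ZMod 7) :=
  Finset.univ.filter (fun x => x.1 = 0 ∧ x.2.1 = 0)

private abbrev G13 := ZMod 5 × ZMod 5 × ZMod 7

private lemma hsum13 : ∀ g : G13, g ∉ H13 → (∑ i : Fin 4, dcount (B13 i) g) = 1 := by decide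

private lemma hzero13 : ∀ g ∈ H13, ∀ i : Fin 4, dcount (B13 i) g = 0 := by decide

private lemma hHsub13 : ∀ a b : G13, a ∈ H13 → b ∈ H13 → a - b ∈ H13 := by decide

private lemma hH713 : H13.card = 7 := by decide

private lemma hB713 : ∀ i, (B13 i).card = 7 := by decide

private lemma h0H13 : (0 : G13) ∈ H13 := by decide

private lemma h17513 : Fintype.card G13 = 175 := by decide

private lemma mem_dcount_filter {B : Finset G13} {a b g : G13}
    (ha : a ∈ B) (hb : b ∈ B) (hab : a ≠ b) (hd : a - b = g) :
    (a, b) ∈ (B ×ˢ B).filter (fun p => p.1 ≠ p.2 ∧ p.1 - p.2 = g) := by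
  simp [Finset.mem_filter, Finset.mem_product, ha, hb, hab, hd]

private lemma dcount_pos {B : Finset G13} {a b g : G13}
    (ha : a ∈ B) (hb : b ∈ B) (hab : a ≠ b) (hd : a - b = g) :
    1 ≤ dcount B g :=
  Finset.card_pos.mpr ⟨(a, b), mem_dcount_filter ha hb hab hd⟩

/-- Key: exactly one triple (i, a, b) gives difference d, for d outside H. -/
private lemma key13 (d : G13) (hd : d ∉ H13) :
    ∃ i a b, a ∈ B13 i ∧ b ∈ B13 i ∧ a ≠ b ∧ a - b = d ∧
      ∀ j a' b', a' ∈ B13 j → b' ∈ B13 j → a' ≠ b' → a' - b' = d →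
        j = i ∧ a' = a ∧ b' = b := by
  have hs := hsum13 d hd
  -- each term is at most 1
  have hle : ∀ j : Fin 4, dcount (B13 j) d ≤ 1 := by
    intro j
    calc dcount (B13 j) d ≤ ∑ i : Fin 4, dcount (B13 i) d :=
          Finset.single_le_sum (f := fun k => dcount (B13 k) d)
            (fun _ _ => Nat.zero_le _) (Finset.mem_univ j)
      _ = 1 := hs
  -- some term is positive
  have hex : ∃ i : Fin 4, dcount (B13 i) d ≠ 0 := by
    by_contra h
    push_neg at h
    rw [Finset.sum_eq_zero (fun i _ => h i)] at hs
    exact zero_ne_one hs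
  obtain ⟨i, hi⟩ := hex
  have hipos : 0 < dcount (B13 i) d := Nat.pos_of_ne_zero hi
  obtain ⟨⟨a, b⟩, hab⟩ := Finset.card_pos.mp hipos
  have hmem := Finset.mem_filter.mp hab
  have hprod := Finset.mem_product.mp hmem.1
  refine ⟨i, a, b, hprod.1, hprod.2, hmem.2.1, hmem.2.2, ?_⟩
  intro j a' b' ha' hb' hab' hd'
  have hj : j = i := by
    by_contra hji
    have hjpos : 1 ≤ dcount (B13 j) d := dcount_pos ha' hb' hab' hd'
    have : dcount (B13 j) d + dcount (B13 i) d ≤ ∑ k : Fin 4, dcount (B13 k) d := by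
      rw [← Finset.sum_pair (f := fun k => dcount (B13 k) d) hji]
      exact Finset.sum_le_sum_of_subset (Finset.subset_univ _)
    omega
  subst hj
  have := Finset.card_le_one.mp (hle j) (a', b')
    (mem_dcount_filter ha' hb' hab' hd') (a, b) hab
  exact ⟨rfl, (Prod.mk.injEq _ _ _ _).mp this |>.1, (Prod.mk.injEq _ _ _ _).mp this |>.2⟩

private lemma mem_H_image {x g : G13} : x ∈ H13.image (· + g) ↔ x - g ∈ H13 := by
  simp only [Finset.mem_image]
  constructor
  · rintro ⟨h, hh, rfl⟩
    simpa using hh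
  · intro h
    exact ⟨x - g, h, by abel⟩

theorem stmt_13 :
    Fintype.card (ZMod 5 × ZMod 5 × ZMod 7) = 175 ∧
    H13.card = 7 ∧
    (∀ g : ZMod 5 × ZMod 5 × ZMod 7, g ∉ H13 → (∑ i : Fin 4, dcount (B13 i) g) = 1) ∧
    (∀ C : Finset (ZMod 5 × ZMod 5 × ZMod 7),
        ((∃ i : Fin 4, ∃ g : ZMod 5 × ZMod 5 × ZMod 7, C = (B13 i).image (· + g)) ∨
          (∃ g : ZMod 5 × ZMod 5 × ZMod 7, C = H13.image (· + g))) → C.card = 7) ∧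
    (∀ p q : ZMod 5 × ZMod 5 × ZMod 7, p ≠ q →
        ∃! C : Finset (ZMod 5 × ZMod 5 × ZMod 7),
          ((∃ i : Fin 4, ∃ g : ZMod 5 × ZMod 5 × ZMod 7, C = (B13 i).image (· + g)) ∨
            (∃ g : ZMod 5 × ZMod 5 × ZMod 7, C = H13.image (· + g))) ∧
            p ∈ C ∧ q ∈ C) := by
  refine ⟨h17513, hH713, hsum13, ?_, ?_⟩
  · rintro C (⟨i, g, rfl⟩ | ⟨g, rfl⟩)
    · rw [Finset.card_image_of_injective _ (add_left_injective g), hB713]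
    · rw [Finset.card_image_of_injective _ (add_left_injective g), hH713]
  · intro p q hpq
    have hd0 : p - q ≠ 0 := sub_ne_zero.mpr hpq
    by_cases hdH : p - q ∈ H13
    · -- the unique block is the coset of H through q
      refine ⟨H13.image (· + q), ⟨Or.inr ⟨q, rfl⟩, ?_, ?_⟩, ?_⟩
      · exact mem_H_image.mpr (by simpa using hdH)
      · exact mem_H_image.mpr (by simpa using h0H13)
      · rintro C ⟨(⟨i, g, rfl⟩ | ⟨g, rfl⟩), hp, hq⟩
        · exfalso
          obtain ⟨a, ha, rfl⟩ := Finset.mem_image.mp hp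
          obtain ⟨b, hb, hbq⟩ := Finset.mem_image.mp hq
          have hab : a ≠ b := by
            intro h; subst h; exact hpq hbq
          have hdiff : a - b = a + g - (b + g) := by abel
          rw [hbq] at hdiff
          have := hzero13 _ hdH i
          have hpos := dcount_pos ha hb hab hdiff
          omega
        · have hqg : q - g ∈ H13 := mem_H_image.mp hq
          apply Finset.ext
          intro x
          rw [mem_H_image, mem_H_image]
          constructor
          · intro hx
            have he : x - q = (x - g) - (q - g) := by abel
            rw [he]
            exact hHsub13 _ _ hx hqg
          · intro hx
            have h3 : (0 : G13) - (q - g) ∈ H13 := hHsub13 _ _ h0H13 hqg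
            have he : x - g = (x - q) - ((0 : G13) - (q - g)) := by abel
            rw [he]
            exact hHsub13 _ _ hx h3
    · obtain ⟨i, a, b, ha, hb, hab, hdiff, huniq⟩ := key13 (p - q) hdH
      refine ⟨(B13 i).image (· + (p - a)), ⟨Or.inl ⟨i, p - a, rfl⟩, ?_, ?_⟩, ?_⟩
      · exact Finset.mem_image.mpr ⟨a, ha, by abel⟩
      · refine Finset.mem_image.mpr ⟨b, hb, ?_⟩
        have : b = a - (p - q) := by rw [← hdiff]; abel
        rw [this]; abel
      · rintro C ⟨(⟨j, g, rfl⟩ | ⟨g, rfl⟩), hp, hq⟩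
        · obtain ⟨a', ha', hap⟩ := Finset.mem_image.mp hp
          obtain ⟨b', hb', hbq⟩ := Finset.mem_image.mp hq
          have hab' : a' ≠ b' := by
            intro h; subst h; rw [hap] at hbq; exact hpq hbq
          have hdiff' : a' - b' = p - q := by
            rw [← hap, ← hbq]; abel
          obtain ⟨hji, haa, hbb⟩ := huniq j a' b' ha' hb' hab' hdiff'
          subst hji; subst haa
          have hg : g = p - a' := by rw [← hap]; abel
          rw [hg]
        · exfalso
          have h1 : p - g ∈ H13 := mem_H_image.mp hp
          have h2 : q - g ∈ H13 := mem_H_image.mp hq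
          have h3 := hHsub13 _ _ h1 h2
          have he : p - g - (q - g) = p - q := by abel
          rw [he] at h3
          exact hdH h3
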